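/- arXiv:2204.10551 — 2 statements merged into one kernel-verified Lean document; each statement's English description precedes it below -/
import Mathlib

section
/- For every α ∈ (-1, 1] and T > 0, there exists C_α > 0 such that for all λ ≥ 0, φ_α(λ) := ∫₀^∞ exp(-(r-λ)²/(2T)) · r^α/(1 + √(rλ)) dr ≤ C_α. -/
open Real MeasureTheory Set

lemma stmt8_key (α T : ℝ) (hα1 : -1 < α) (hα2 : α ≤ 1) (hT : 0 < T)
    (l r : ℝ) (hl : 0 ≤ l) (hr : 0 < r) :
    Real.exp (-(r - l) ^ 2 / (2 * T)) * (r ^ α / (1 + Real.sqrt (r * l))) ≤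
      r ^ α * Real.exp (-(r ^ 2) / (8 * T)) +
        (Set.Ioc (0:ℝ) 1).indicator (fun x => x ^ α) r +
        Real.sqrt 2 * Real.exp (-(r - l) ^ 2 / (2 * T)) := by
  have hs : (0:ℝ) ≤ Real.sqrt (r * l) := Real.sqrt_nonneg _
  have h1 : (0:ℝ) < 1 + Real.sqrt (r * l) := by linarith
  have hra : (0:ℝ) ≤ r ^ α := Real.rpow_nonneg hr.le α
  have hratio : r ^ α / (1 + Real.sqrt (r * l)) ≤ r ^ α :=
    div_le_self hra (by linarith)
  have hexp_pos : (0:ℝ) < Real.exp (-(r - l) ^ 2 / (2 * T)) := Real.exp_pos _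
  have hind : (0:ℝ) ≤ (Set.Ioc (0:ℝ) 1).indicator (fun x => x ^ α) r := by
    apply Set.indicator_nonneg
    intro x hx
    exact Real.rpow_nonneg hx.1.le α
  have hsqrt2 : (0:ℝ) < Real.sqrt 2 := by positivity
  rcases le_or_gt l (r / 2) with hc | hc
  · -- l ≤ r/2 : exponent bound
    have hexple : Real.exp (-(r - l) ^ 2 / (2 * T)) ≤ Real.exp (-(r ^ 2) / (8 * T)) := by
      apply Real.exp_le_exp.2
      rw [div_le_div_iff₀ (by positivity) (by positivity)]
      have h9 : r ^ 2 ≤ 4 * (r - l) ^ 2 := by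
        nlinarith [mul_nonneg (by linarith : (0:ℝ) ≤ r - 2 * l)
          (by linarith : (0:ℝ) ≤ 3 * r - 2 * l)]
      nlinarith [mul_le_mul_of_nonneg_right h9 hT.le]
    have : Real.exp (-(r - l) ^ 2 / (2 * T)) * (r ^ α / (1 + Real.sqrt (r * l))) ≤
        Real.exp (-(r ^ 2) / (8 * T)) * r ^ α := by
      apply mul_le_mul hexple hratio (by positivity) (Real.exp_pos _).le
    nlinarith [mul_pos hsqrt2 hexp_pos]
  · rcases le_or_gt r 1 with hr1 | hr1
    · -- r ≤ 1 : use indicator term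
      have hmem : r ∈ Set.Ioc (0:ℝ) 1 := ⟨hr, hr1⟩
      rw [Set.indicator_of_mem hmem]
      have : Real.exp (-(r - l) ^ 2 / (2 * T)) * (r ^ α / (1 + Real.sqrt (r * l))) ≤
          1 * r ^ α := by
        apply mul_le_mul _ hratio (by positivity) zero_le_one
        exact Real.exp_le_one_iff.2 (div_nonpos_of_nonpos_of_nonneg (neg_nonpos.2 (sq_nonneg _)) (by positivity))
      have h2 : (0:ℝ) ≤ r ^ α * Real.exp (-(r ^ 2) / (8 * T)) := by positivity
      nlinarith [mul_pos hsqrt2 hexp_pos]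
    · -- r > 1 and l > r/2 : ratio ≤ √2
      have hratio2 : r ^ α / (1 + Real.sqrt (r * l)) ≤ Real.sqrt 2 := by
        rw [div_le_iff₀ h1]
        have h3 : r ^ α ≤ r := by
          calc r ^ α ≤ r ^ (1:ℝ) := Real.rpow_le_rpow_of_exponent_le hr1.le hα2
          _ = r := Real.rpow_one r
        have h4 : r / Real.sqrt 2 ≤ Real.sqrt (r * l) := by
          have : Real.sqrt (r ^ 2 / 2) ≤ Real.sqrt (r * l) := by
            apply Real.sqrt_le_sqrt
            nlinarith
          calc r / Real.sqrt 2 = Real.sqrt (r ^ 2) / Real.sqrt 2 := by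
                rw [Real.sqrt_sq hr.le]
            _ = Real.sqrt (r ^ 2 / 2) := (Real.sqrt_div (by positivity) 2).symm
            _ ≤ Real.sqrt (r * l) := this
        have h5 : r ≤ Real.sqrt 2 * Real.sqrt (r * l) := by
          have := mul_le_mul_of_nonneg_left h4 hsqrt2.le
          calc r = Real.sqrt 2 * (r / Real.sqrt 2) := by field_simp
            _ ≤ Real.sqrt 2 * Real.sqrt (r * l) := this
        nlinarith
      have : Real.exp (-(r - l) ^ 2 / (2 * T)) * (r ^ α / (1 + Real.sqrt (r * l))) ≤
          Real.exp (-(r - l) ^ 2 / (2 * T)) * Real.sqrt 2 :=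
        mul_le_mul_of_nonneg_left hratio2 (Real.exp_pos _).le
      have h2 : (0:ℝ) ≤ r ^ α * Real.exp (-(r ^ 2) / (8 * T)) := by positivity
      nlinarith

theorem stmt_8 (α T : ℝ) (hα : α ∈ Set.Ioc (-1:ℝ) 1) (hT : 0 < T) :
    ∃ C : ℝ, 0 < C ∧ ∀ l : ℝ, 0 ≤ l →
      ∫ r in Set.Ioi (0:ℝ),
          Real.exp (-(r - l) ^ 2 / (2 * T)) * (r ^ α / (1 + Real.sqrt (r * l))) ≤ C := by
  obtain ⟨hα1, hα2⟩ := hα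
  set I1 : ℝ := ∫ r in Set.Ioi (0:ℝ), r ^ α * Real.exp (-(r ^ 2) / (8 * T)) with hI1
  set I2 : ℝ := ∫ r in Set.Ioi (0:ℝ), (Set.Ioc (0:ℝ) 1).indicator (fun x => x ^ α) r with hI2
  refine ⟨I1 + I2 + Real.sqrt 2 * Real.sqrt (π / (1 / (2 * T))), ?_, ?_⟩
  · have h1 : 0 ≤ I1 := setIntegral_nonneg measurableSet_Ioi (fun x hx =>
      mul_nonneg (Real.rpow_nonneg (le_of_lt hx) α) (Real.exp_pos _).le)
    have h2 : 0 ≤ I2 := setIntegral_nonneg measurableSet_Ioi (fun x hx => by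
      apply Set.indicator_nonneg; intro y hy; exact Real.rpow_nonneg hy.1.le α)
    have h3 : 0 < Real.sqrt 2 * Real.sqrt (π / (1 / (2 * T))) := by
      apply mul_pos (by positivity)
      exact Real.sqrt_pos.2 (div_pos Real.pi_pos (by positivity))
    linarith
  intro l hl
  -- integrability facts
  have hint1 : IntegrableOn (fun r : ℝ => r ^ α * Real.exp (-(r ^ 2) / (8 * T)))
      (Set.Ioi (0:ℝ)) := by
    have := (integrable_rpow_mul_exp_neg_mul_sq (b := (8 * T)⁻¹) (by positivity) hα1)
    refine (this.congr ?_).integrableOn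
    filter_upwards with x
    ring_nf
  have hint2 : Integrable ((Set.Ioc (0:ℝ) 1).indicator (fun x : ℝ => x ^ α)) := by
    have h := (intervalIntegral.intervalIntegrable_rpow' (a := 0) (b := 1) hα1).1
    exact h.integrable_indicator measurableSet_Ioc
  have hint3 : Integrable (fun r : ℝ => Real.exp (-(r - l) ^ 2 / (2 * T))) := by
    have := (integrable_exp_neg_mul_sq (b := (2 * T)⁻¹) (by positivity)).comp_sub_right l
    refine this.congr ?_
    filter_upwards with x
    ring_nf
  have hint3' : Integrable (fun r : ℝ => Real.sqrt 2 * Real.exp (-(r - l) ^ 2 / (2 * T))) :=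
    hint3.const_mul _
  have hadd : IntegrableOn (fun r : ℝ =>
      r ^ α * Real.exp (-(r ^ 2) / (8 * T)) +
        (Set.Ioc (0:ℝ) 1).indicator (fun x => x ^ α) r) (Set.Ioi (0:ℝ)) :=
    hint1.add hint2.integrableOn
  have hg : IntegrableOn (fun r : ℝ =>
      r ^ α * Real.exp (-(r ^ 2) / (8 * T)) +
        (Set.Ioc (0:ℝ) 1).indicator (fun x => x ^ α) r +
        Real.sqrt 2 * Real.exp (-(r - l) ^ 2 / (2 * T))) (Set.Ioi (0:ℝ)) :=
    hadd.add hint3'.integrableOn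
  calc ∫ r in Set.Ioi (0:ℝ),
          Real.exp (-(r - l) ^ 2 / (2 * T)) * (r ^ α / (1 + Real.sqrt (r * l)))
      ≤ ∫ r in Set.Ioi (0:ℝ),
          (r ^ α * Real.exp (-(r ^ 2) / (8 * T)) +
            (Set.Ioc (0:ℝ) 1).indicator (fun x => x ^ α) r +
            Real.sqrt 2 * Real.exp (-(r - l) ^ 2 / (2 * T))) := by
        apply integral_mono_of_nonneg
        · rw [Filter.EventuallyLE, ae_restrict_iff' measurableSet_Ioi]
          filter_upwards with r hr
          have : (0:ℝ) < 1 + Real.sqrt (r * l) := by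
            have := Real.sqrt_nonneg (r * l); linarith
          exact mul_nonneg (Real.exp_pos _).le
            (div_nonneg (Real.rpow_nonneg (le_of_lt hr) α) this.le)
        · exact hg
        · rw [Filter.EventuallyLE, ae_restrict_iff' measurableSet_Ioi]
          filter_upwards with r hr
          exact stmt8_key α T hα1 hα2 hT l r hl hr
    _ = I1 + I2 + ∫ r in Set.Ioi (0:ℝ), Real.sqrt 2 * Real.exp (-(r - l) ^ 2 / (2 * T)) := by
        rw [integral_add hadd hint3'.integrableOn, integral_add hint1 hint2.integrableOn]
    _ ≤ I1 + I2 + Real.sqrt 2 * Real.sqrt (π / (1 / (2 * T))) := by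
        gcongr
        have h6 : ∫ r in Set.Ioi (0:ℝ), Real.sqrt 2 * Real.exp (-(r - l) ^ 2 / (2 * T)) =
            Real.sqrt 2 * ∫ r in Set.Ioi (0:ℝ), Real.exp (-(r - l) ^ 2 / (2 * T)) := by
          rw [integral_const_mul]
        rw [h6]
        apply mul_le_mul_of_nonneg_left _ (Real.sqrt_nonneg 2)
        have h7 : ∫ r in Set.Ioi (0:ℝ), Real.exp (-(r - l) ^ 2 / (2 * T)) ≤
            ∫ r : ℝ, Real.exp (-(r - l) ^ 2 / (2 * T)) := by
          apply setIntegral_le_integral hint3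
          filter_upwards with x using (Real.exp_pos _).le
        have h8 : ∫ r : ℝ, Real.exp (-(r - l) ^ 2 / (2 * T)) =
            Real.sqrt (π / (1 / (2 * T))) := by
          rw [integral_sub_right_eq_self (fun r : ℝ => Real.exp (-r ^ 2 / (2 * T))) l]
          rw [← integral_gaussian (1 / (2 * T))]
          congr 1 with x
          ring_nf
        linarith [h7, h8 ▸ h7]
end

section
/- For β ≥ 0 and T > 0 there exists C > 0 such that for all I ≥ 0, ∫_{max(J-I,0)}^∞ 𝟙_{I* ≥ 1} e^{(J - I - 2I*)/(2T)} I*^{β} dI* ≤ C e^{-|J-I|/(4T)} for all J ≥ 0. -/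
/-!
For `x ≥ max (J - I) 0` the exponent satisfies
`(J - I - 2x) / (2T) ≤ -|J - I| / (4T) - x / (4T)`, so the integrand is at most
`exp (-|J - I| / (4T))` times the fixed majorant `x ^ max β 0 * exp (-x / (4T))`, whose integral
over `(0, ∞)` is finite; on `x ≥ 1` the power `x ^ β` is dominated by `x ^ max β 0`.
-/

open MeasureTheory Set Real

lemma integrableOn_rpow_mul_exp_neg_mul_Ioi {s b : ℝ} (hs : -1 < s) (hb : 0 < b) :
    IntegrableOn (fun x : ℝ => x ^ s * exp (-b * x)) (Ioi 0) := by
  simpa only [rpow_one] using integrableOn_rpow_mul_exp_neg_mul_rpow hs zero_lt_one hb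

lemma exp_div_le_exp_neg_abs_mul_exp {a x T : ℝ} (hT : 0 < T) (hx : 0 ≤ x) (hax : a ≤ x) :
    exp ((a - 2 * x) / (2 * T)) ≤ exp (-|a| / (4 * T)) * exp (-(4 * T)⁻¹ * x) := by
  rw [← exp_add, exp_le_exp, neg_mul, inv_mul_eq_div, ← neg_div, ← add_div,
    div_le_div_iff₀ (by positivity) (by positivity)]
  rcases abs_cases a with ⟨ha, _⟩ | ⟨ha, _⟩ <;> rw [ha] <;> nlinarith

lemma ite_exp_mul_rpow_le {a x β T : ℝ} (hT : 0 < T) (hx : max a 0 < x) :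
    (if (1 : ℝ) ≤ x then exp ((a - 2 * x) / (2 * T)) * x ^ β else 0)
      ≤ exp (-|a| / (4 * T)) * (x ^ max β 0 * exp (-(4 * T)⁻¹ * x)) := by
  have hx0 : 0 ≤ x := (le_max_right a 0).trans hx.le
  split_ifs with h1
  · rw [mul_comm (x ^ max β 0), ← mul_assoc]
    exact mul_le_mul (exp_div_le_exp_neg_abs_mul_exp hT hx0 ((le_max_left a 0).trans hx.le))
      (rpow_le_rpow_of_exponent_le h1 (le_max_left β 0)) (by positivity) (by positivity)
  · positivity

theorem stmt_15_general (β T : ℝ) (hT : 0 < T) :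
    ∃ C : ℝ, 0 < C ∧ ∀ I : ℝ, 0 ≤ I → ∀ J : ℝ, 0 ≤ J →
      ∫ x in Set.Ioi (max (J - I) 0),
          (if (1:ℝ) ≤ x then Real.exp ((J - I - 2 * x) / (2 * T)) * x ^ β else 0)
        ≤ C * Real.exp (-|J - I| / (4 * T)) := by
  set h : ℝ → ℝ := fun x => x ^ max β 0 * exp (-(4 * T)⁻¹ * x)
  have h_int : IntegrableOn h (Ioi 0) :=
    integrableOn_rpow_mul_exp_neg_mul_Ioi (by linarith [le_max_right β 0]) (by positivity)
  have h_nonneg : ∀ x ∈ Ioi (0 : ℝ), 0 ≤ h x := fun x hx => by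
    have : (0 : ℝ) ≤ x := le_of_lt hx
    positivity
  set G := ∫ x in Ioi 0, h x
  have hG : 0 ≤ G := setIntegral_nonneg measurableSet_Ioi h_nonneg
  refine ⟨G + 1, by linarith, fun I _ J _ => ?_⟩
  have hm : Ioi (max (J - I) 0) ⊆ Ioi 0 := Ioi_subset_Ioi (le_max_right _ _)
  calc _ ≤ ∫ x in Ioi (max (J - I) 0), exp (-|J - I| / (4 * T)) * h x := by
        refine integral_mono_of_nonneg (.of_forall fun x => ?_)
          ((h_int.mono_set hm).const_mul _) ?_
        · dsimp only
          split_ifs <;> positivity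
        · filter_upwards [ae_restrict_mem measurableSet_Ioi] with x hx
          exact ite_exp_mul_rpow_le hT hx
    _ = exp (-|J - I| / (4 * T)) * ∫ x in Ioi (max (J - I) 0), h x := integral_const_mul _ _
    _ ≤ exp (-|J - I| / (4 * T)) * G := by
        gcongr
        exact setIntegral_mono_set h_int
          (ae_restrict_of_forall_mem measurableSet_Ioi h_nonneg) hm.eventuallyLE
    _ ≤ (G + 1) * exp (-|J - I| / (4 * T)) := by
        rw [mul_comm]
        gcongr
        linarith

theorem stmt_15 (β T : ℝ) (hβ : 0 ≤ β) (hT : 0 < T) :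
    ∃ C : ℝ, 0 < C ∧ ∀ I : ℝ, 0 ≤ I → ∀ J : ℝ, 0 ≤ J →
      ∫ x in Set.Ioi (max (J - I) 0),
          (if (1:ℝ) ≤ x then Real.exp ((J - I - 2 * x) / (2 * T)) * x ^ β else 0)
        ≤ C * Real.exp (-|J - I| / (4 * T)) :=
  stmt_15_general β T hT
end
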